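/- Let A = {L_0, L_1, …, L_n} be a line arrangement in ℙ²(ℂ) such that every point of multiplicity at least 3 in A lies on the union L_0 ∪ L_1 of two of its lines (type C_k with k ≤ 2). Then every rank one local system on the complement M is admissible. -/

import Mathlib

noncomputable section

open Finset Complex

attribute [local instance] Classical.propDecidable

/-- The complex projective plane ℙ²(ℂ). -/
abbrev PP : Type := Projectivization ℂ (Fin 3 → ℂ)

/-- A projective line in ℙ²(ℂ), given as a nonzero linear form up to scalar. -/
abbrev PLine : Type := Projectivization ℂ (Module.Dual ℂ (Fin 3 → ℂ))

/-- Membership of a point on a projective line. -/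
def memL (p : PP) (L : PLine) : Prop := L.rep p.rep = 0

/-- A point has multiplicity at least 3 in the arrangement `L`. -/
def multGe3 {N : ℕ} (L : Fin N → PLine) (p : PP) : Prop :=
  3 ≤ (Finset.univ.filter fun j => memL p (L j)).card

/-- The strictly positive integers, inside ℂ. -/
def PosIntC : Set ℂ := {z | ∃ m : ℤ, 0 < m ∧ z = (m : ℂ)}

/-- The strictly positive integers, inside ℝ. -/
def PosIntR : Set ℝ := {x | ∃ m : ℤ, 0 < m ∧ x = (m : ℝ)}

/-- `a(p)`: the sum of residues over lines through `p`. -/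
def aSum {N : ℕ} (L : Fin N → PLine) (a : Fin N → ℂ) (p : PP) : ℂ :=
  ∑ j ∈ Finset.univ.filter (fun j => memL p (L j)), a j

/-- Admissibility of the rank one local system with monodromies `lam`. -/
def Admissible {N : ℕ} (L : Fin N → PLine) (lam : Fin N → ℂˣ) : Prop :=
  ∃ a : Fin N → ℂ,
    (∀ j, Complex.exp (2 * (Real.pi : ℂ) * Complex.I * a j) = (lam j : ℂ)) ∧
    (∑ j, a j = 0) ∧
    (∀ j, a j ∉ PosIntC) ∧
    (∀ p : PP, multGe3 L p → aSum L a p ∉ PosIntC)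

/-!
Choose residues `l j` of the monodromies with real parts in `[0, 1)`. Their sum is an integer
`N ≥ 0`, and we subtract `k₀` from `l 0` and `N - k₀` from `l 1`. At a multiple point on both
`L 0` and `L 1` the real part of `a(p)` is then at most `0`. Take `k₀` to be the largest sum
`σ(p) = ∑_{p ∈ L j} l j` that is a natural number, over multiple points `p` on `L 0` but not
on `L 1` (or `0` if there is none; all these sums are at most `N`); then `σ(p) - k₀` is never
a positive integer. For a multiple point `q` on `L 1` only, a point `p` realizing `k₀` and `q`
share at most one line, so `Re σ(q) + σ(p) < N + 1`, that is, `Re a(q) < 1`.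
-/

open Module

theorem Projectivization.eq_of_rep_apply_eq_zero {K V : Type*} [Field K] [AddCommGroup V]
    [Module K V] (hV : finrank K V = 3) {p q : Projectivization K V} (hpq : p ≠ q)
    {L L' : Projectivization K (Dual K V)} (hLp : L.rep p.rep = 0) (hLq : L.rep q.rep = 0)
    (hL'p : L'.rep p.rep = 0) (hL'q : L'.rep q.rep = 0) : L = L' := by
  have : FiniteDimensional K V := Module.finite_of_finrank_eq_succ hV
  set W := Submodule.span K (Set.range ![p.rep, q.rep])
  have hW : finrank K W = 2 := by
    have hli : LinearIndependent K ![p.rep, q.rep] := by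
      convert independent_iff.mp ((independent_pair_iff_ne p q).mpr hpq) using 1
      ext i; fin_cases i <;> rfl
    simpa using finrank_span_eq_card hli
  have hann : finrank K W.dualAnnihilator = 1 := by
    have := Subspace.finrank_add_finrank_dualAnnihilator_eq W
    omega
  have mem_ann : ∀ φ : Dual K V, φ p.rep = 0 → φ q.rep = 0 → φ ∈ W.dualAnnihilator := by
    intro φ hp hq
    rw [Submodule.mem_dualAnnihilator]
    intro w hw
    refine Submodule.span_induction ?_ ?_ ?_ ?_ hw
    all_goals simp_all
  obtain ⟨c, hc⟩ := exists_smul_eq_of_finrank_eq_one (V := W.dualAnnihilator) hann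
    (x := ⟨L.rep, mem_ann _ hLp hLq⟩) (by simpa using L.rep_nonzero) ⟨L'.rep, mem_ann _ hL'p hL'q⟩
  rw [← L.mk_rep, ← L'.mk_rep, eq_comm, mk_eq_mk_iff']
  exact ⟨c, congrArg Subtype.val hc⟩

lemma card_filter_memL_inter_le_one {N : ℕ} {L : Fin N → PLine} (hL : Function.Injective L)
    {p q : PP} (hpq : p ≠ q) :
    #((univ.filter fun j => memL p (L j)) ∩ univ.filter fun j => memL q (L j)) ≤ 1 := by
  refine card_le_one.mpr fun i hi j hj => hL ?_
  simp only [mem_inter, mem_filter, mem_univ, true_and] at hi hj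
  exact Projectivization.eq_of_rep_apply_eq_zero (by simp) hpq hi.1 hi.2 hj.1 hj.2

lemma exists_exp_two_pi_I_mul_eq_and_re_mem_Ico {z : ℂ} (hz : z ≠ 0) :
    ∃ l : ℂ, exp (2 * Real.pi * I * l) = z ∧ 0 ≤ l.re ∧ l.re < 1 := by
  set c := log z / (2 * Real.pi * I)
  refine ⟨c - ⌊c.re⌋, ?_, by simp [Int.fract_nonneg], by simpa using Int.fract_lt_one c.re⟩
  have h2πI : (2 * Real.pi * I : ℂ) ≠ 0 := by simp [Real.pi_ne_zero]
  rw [mul_sub, mul_div_cancel₀ _ h2πI, mul_comm _ (⌊c.re⌋ : ℂ), exp_sub,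
    exp_int_mul_two_pi_mul_I, div_one, exp_log hz]

lemma exists_nat_sum_eq_of_prod_exp_eq_one {ι : Type*} [Fintype ι] {l : ι → ℂ}
    (hl : ∀ j, 0 ≤ (l j).re) (h : ∏ j, exp (2 * Real.pi * I * l j) = 1) :
    ∃ N : ℕ, ∑ j, l j = N := by
  rw [← exp_sum, ← mul_sum, exp_eq_one_iff] at h
  obtain ⟨m, hm⟩ := h
  have hsum : ∑ j, l j = m := mul_left_cancel₀ (by simp [Real.pi_ne_zero]) (hm.trans (mul_comm _ _))
  have : 0 ≤ m := by
    have : (0 : ℝ) ≤ (∑ j, l j).re := by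
      rw [re_sum]
      exact sum_nonneg fun j _ => hl j
    rw [hsum, intCast_re] at this
    exact_mod_cast this
  lift m to ℕ using this
  exact ⟨m, hsum⟩

lemma notMem_posIntC_of_re_lt_one {z : ℂ} (hz : z.re < 1) : z ∉ PosIntC := by
  rintro ⟨m, hm, rfl⟩
  have : (m : ℝ) < 1 := by simpa using hz
  have : m < 1 := by exact_mod_cast this
  omega

section ResidueShift

variable {ι : Type*}

lemma re_sum_le_re_sum_of_subset {l : ι → ℂ} (hl : ∀ j, 0 ≤ (l j).re) {s t : Finset ι}
    (hst : s ⊆ t) : (∑ j ∈ s, l j).re ≤ (∑ j ∈ t, l j).re := by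
  simp only [re_sum]
  exact sum_le_sum_of_subset_of_nonneg hst fun j _ _ => hl j

def integralSums (l : ι → ℂ) (𝒮 : Set (Finset ι)) (i₀ i₁ : ι) : Set ℕ :=
  {m | ∃ S ∈ 𝒮, i₀ ∈ S ∧ i₁ ∉ S ∧ ∑ j ∈ S, l j = m}

variable [Fintype ι] {l : ι → ℂ} {𝒮 : Set (Finset ι)} {i₀ i₁ : ι} {N : ℕ}

lemma integralSums_subset_Iic (hl : ∀ j, 0 ≤ (l j).re) (hN : ∑ j, l j = N) :
    integralSums l 𝒮 i₀ i₁ ⊆ Set.Iic N := by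
  rintro m ⟨S, -, -, -, hS⟩
  have := re_sum_le_re_sum_of_subset hl (subset_univ S)
  rw [hS, hN] at this
  exact_mod_cast this

lemma bddAbove_integralSums (hl : ∀ j, 0 ≤ (l j).re) (hN : ∑ j, l j = N) :
    BddAbove (integralSums l 𝒮 i₀ i₁) :=
  bddAbove_Iic.mono (integralSums_subset_Iic hl hN)

lemma sum_ne_add_sSup_integralSums (hl : ∀ j, 0 ≤ (l j).re) (hN : ∑ j, l j = N)
    {S : Finset ι} (hS : S ∈ 𝒮) (h₀ : i₀ ∈ S) (h₁ : i₁ ∉ S) {m : ℕ} (hm : 0 < m) :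
    ∑ j ∈ S, l j ≠ ↑(m + sSup (integralSums l 𝒮 i₀ i₁)) := by
  intro hSm
  have := le_csSup (bddAbove_integralSums hl hN) ⟨S, hS, h₀, h₁, hSm⟩
  omega

variable [DecidableEq ι]

lemma re_sum_add_re_sum_lt_of_card_inter_le_one (hl0 : ∀ j, 0 ≤ (l j).re)
    (hl1 : ∀ j, (l j).re < 1) {s t : Finset ι} (hst : #(s ∩ t) ≤ 1) :
    (∑ j ∈ s, l j).re + (∑ j ∈ t, l j).re < (∑ j, l j).re + 1 := by
  have hinter : (∑ j ∈ s ∩ t, l j).re < 1 := by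
    obtain h | h := Nat.le_one_iff_eq_zero_or_eq_one.mp hst
    · simp [card_eq_zero.mp h]
    · obtain ⟨x, hx⟩ := card_eq_one.mp h
      simpa [hx] using hl1 x
  have hunion := re_sum_le_re_sum_of_subset hl0 (subset_univ (s ∪ t))
  rw [← add_re, ← sum_union_inter, add_re]
  linarith

lemma re_sum_add_sSup_integralSums_lt (hl0 : ∀ j, 0 ≤ (l j).re) (hl1 : ∀ j, (l j).re < 1)
    (hN : ∑ j, l j = N)
    (h𝒮 : ∀ S ∈ 𝒮, ∀ T ∈ 𝒮, i₀ ∈ S → i₁ ∉ S → i₀ ∉ T → i₁ ∈ T → #(S ∩ T) ≤ 1)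
    {T : Finset ι} (hT : T ∈ 𝒮) (h₀ : i₀ ∉ T) (h₁ : i₁ ∈ T) :
    (∑ j ∈ T, l j).re + sSup (integralSums l 𝒮 i₀ i₁) < N + 1 := by
  obtain hempty | hne := (integralSums l 𝒮 i₀ i₁).eq_empty_or_nonempty
  · have := re_sum_le_re_sum_of_subset hl0 (subset_univ T)
    simp only [hN, natCast_re] at this
    simp only [hempty, csSup_empty, bot_eq_zero, CharP.cast_eq_zero]
    linarith
  obtain ⟨S, hS, hS₀, hS₁, hSk⟩ := Nat.sSup_mem hne (bddAbove_integralSums hl0 hN)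
  have := re_sum_add_re_sum_lt_of_card_inter_le_one hl0 hl1 (h𝒮 S hS T hT hS₀ hS₁ h₀ h₁)
  rw [hSk, hN, add_comm] at this
  simpa using this

theorem exists_nat_shift_of_forall_mem_or_mem (hl0 : ∀ j, 0 ≤ (l j).re)
    (hl1 : ∀ j, (l j).re < 1) (hN : ∑ j, l j = N) (hcov : ∀ S ∈ 𝒮, i₀ ∈ S ∨ i₁ ∈ S)
    (h𝒮 : ∀ S ∈ 𝒮, ∀ T ∈ 𝒮, i₀ ∈ S → i₁ ∉ S → i₀ ∉ T → i₁ ∈ T → #(S ∩ T) ≤ 1) :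
    ∃ k : ι → ℕ, ∑ j, (l j - k j) = 0 ∧ (∀ j, l j - k j ∉ PosIntC) ∧
      ∀ S ∈ 𝒮, ∑ j ∈ S, (l j - k j) ∉ PosIntC := by
  set k₀ := sSup (integralSums l 𝒮 i₀ i₁)
  have hk₀ : k₀ ≤ N := csSup_le' fun _ hm => integralSums_subset_Iic hl0 hN hm
  set k : ι → ℕ := Pi.single i₀ k₀ + Pi.single i₁ (N - k₀)
  have hsum (S : Finset ι) : ∑ j ∈ S, (l j - k j) =
      ∑ j ∈ S, l j - ↑((if i₀ ∈ S then k₀ else 0) + (if i₁ ∈ S then N - k₀ else 0)) := by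
    rw [sum_sub_distrib, ← Nat.cast_sum]
    simp only [k, Pi.add_apply, sum_add_distrib, sum_pi_single']
  refine ⟨k, ?_, fun j => notMem_posIntC_of_re_lt_one ?_, fun S hS => ?_⟩
  · simp [hsum, hN, Nat.add_sub_cancel' hk₀]
  · simp only [sub_re, natCast_re]
    linarith [hl1 j, (k j).cast_nonneg (α := ℝ)]
  by_cases h₀ : i₀ ∈ S
  · by_cases h₁ : i₁ ∈ S
    · refine notMem_posIntC_of_re_lt_one ?_
      have := re_sum_le_re_sum_of_subset hl0 (subset_univ S)
      simp only [hsum, h₀, h₁, if_true, Nat.add_sub_cancel' hk₀, sub_re, natCast_re]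
      simp only [hN, natCast_re] at this
      linarith
    · rintro ⟨m, hm, hSm⟩
      lift m to ℕ using hm.le
      refine sum_ne_add_sSup_integralSums hl0 hN hS h₀ h₁ (by exact_mod_cast hm) ?_
      simp only [hsum, h₀, h₁, if_true, if_false, add_zero] at hSm
      push_cast
      linear_combination hSm
  · have h₁ := (hcov S hS).resolve_left h₀
    refine notMem_posIntC_of_re_lt_one ?_
    have := re_sum_add_sSup_integralSums_lt hl0 hl1 hN h𝒮 hS h₀ h₁
    simp only [hsum, h₀, h₁, if_true, if_false, zero_add, sub_re, natCast_re,
      Nat.cast_sub hk₀]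
    linarith

end ResidueShift

/-- If every point of multiplicity at least 3 of the line arrangement
`A = {L 0, …, L (n+1)}` in `ℙ²(ℂ)` lies on the union `L 0 ∪ L 1` of two of its lines, then
every rank one local system on the complement is admissible. -/
theorem admissible_of_two_lines_cover {n : ℕ} (L : Fin (n + 2) → PLine)
    (hdist : Function.Injective L)
    (hcov : ∀ p : PP, multGe3 L p → memL p (L 0) ∨ memL p (L 1))
    (lam : Fin (n + 2) → ℂˣ) (hlam : ∏ j, lam j = 1) :
    Admissible L lam := by
  choose l hexp hl0 hl1 using fun j => exists_exp_two_pi_I_mul_eq_and_re_mem_Ico (lam j).ne_zero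
  obtain ⟨N, hN⟩ :=
    exists_nat_sum_eq_of_prod_exp_eq_one hl0 (by simp [hexp, ← Units.coe_prod, hlam])
  set 𝒮 := {S | ∃ p, multGe3 L p ∧ S = univ.filter fun j => memL p (L j)}
  have hcov𝒮 : ∀ S ∈ 𝒮, 0 ∈ S ∨ 1 ∈ S := by
    rintro _ ⟨p, hp, rfl⟩
    simpa using hcov p hp
  have h𝒮 : ∀ S ∈ 𝒮, ∀ T ∈ 𝒮, 0 ∈ S → 1 ∉ S → 0 ∉ T → 1 ∈ T → #(S ∩ T) ≤ 1 := by
    rintro _ ⟨p, -, rfl⟩ _ ⟨q, -, rfl⟩ hp₀ - hq₀ -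
    exact card_filter_memL_inter_le_one hdist fun hpq => hq₀ (hpq ▸ hp₀)
  obtain ⟨k, hsum, hres, hpts⟩ := exists_nat_shift_of_forall_mem_or_mem hl0 hl1 hN hcov𝒮 h𝒮
  refine ⟨fun j => l j - k j, fun j => ?_, hsum, hres, fun p hp => hpts _ ⟨p, hp, rfl⟩⟩
  rw [mul_sub, exp_sub, mul_comm _ (k j : ℂ), exp_nat_mul_two_pi_mul_I, div_one, hexp]
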